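/- arXiv:2312.15079 — 3 statements merged into one kernel-verified Lean document; each statement's English description precedes it below -/
import Mathlib

section
/- If G is an n×n diagonal matrix with i.i.d. Rademacher diagonal entries and A, B are fixed symmetric n×n matrices, then the (i,j)-entry of E[G A G B G A G] equals (A_{ii}A_{jj} + A_{ij}²)B_{ij} for i ≠ j, and equals ∑_{k=1}^n A_{ik}² B_{kk} for i = j. -/
/-!
Expanding the products of diagonal matrices, the `(i, j)` entry of `G A G B G A G` is
`∑ k l, A i k * B k l * A l j * (g i * g k * g l * g j)`. Since `g k ^ 2 = 1` and `E[g k] = 0`,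
the fourth moment `E[g i * g k * g l * g j]` is `1` when the four indices pair up and `0`
otherwise: four indices that do not pair up contain one occurring exactly once, and that factor
is independent of the other three. Only the pairings `k = l` (when `i = j`), respectively
`(k, l) = (i, j)` and `(k, l) = (j, i)` (when `i ≠ j`), survive the double sum.
-/

open MeasureTheory ProbabilityTheory Matrix

section Rademacher

variable {Ω : Type*} [MeasurableSpace Ω] {μ : Measure Ω} [IsProbabilityMeasure μ] {X : Ω → ℝ}
  (hX : Measurable X) (h₁ : μ {ω | X ω = 1} = 1 / 2) (h₂ : μ {ω | X ω = -1} = 1 / 2)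
include hX h₁ h₂

theorem ae_eq_one_or_eq_neg_one_of_rademacher : ∀ᵐ ω ∂μ, X ω = 1 ∨ X ω = -1 := by
  have hdisj : Disjoint {ω | X ω = 1} {ω | X ω = -1} :=
    Set.disjoint_left.mpr fun ω h h' => by norm_num [h.out] at h'
  have hS : MeasurableSet ({ω | X ω = 1} ∪ {ω | X ω = -1}) :=
    (hX (measurableSet_singleton _)).union (hX (measurableSet_singleton _))
  refine (ae_mem_iff_measure_eq hS.nullMeasurableSet).mpr ?_
  rw [measure_univ, measure_union hdisj (hX (measurableSet_singleton _)), h₁, h₂,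
    ENNReal.add_halves]

theorem ae_mul_self_eq_one_of_rademacher : ∀ᵐ ω ∂μ, X ω * X ω = 1 := by
  filter_upwards [ae_eq_one_or_eq_neg_one_of_rademacher hX h₁ h₂] with ω hω
  rcases hω with hω | hω <;> norm_num [hω]

theorem integral_eq_zero_of_rademacher : ∫ ω, X ω ∂μ = 0 := by
  have hS₁ : MeasurableSet {ω | X ω = 1} := hX (measurableSet_singleton 1)
  have hS₂ : MeasurableSet {ω | X ω = -1} := hX (measurableSet_singleton (-1))
  have hsplit : X =ᵐ[μ] {ω | X ω = 1}.indicator 1 - {ω | X ω = -1}.indicator 1 := by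
    filter_upwards [ae_eq_one_or_eq_neg_one_of_rademacher hX h₁ h₂] with ω hω
    rcases hω with hω | hω <;> norm_num [Set.indicator, hω]
  rw [integral_congr_ae hsplit, integral_sub' ((integrable_const 1).indicator hS₁)
    ((integrable_const 1).indicator hS₂), integral_indicator_one hS₁, integral_indicator_one hS₂,
    measureReal_def, measureReal_def, h₁, h₂, sub_self]

end Rademacher

theorem ProbabilityTheory.iIndepFun.indepFun_mul_mul_of_ne {Ω ι : Type*} [MeasurableSpace Ω]
    {μ : Measure Ω} [DecidableEq ι] {g : ι → Ω → ℝ} (hindep : iIndepFun g μ)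
    (hmeas : ∀ i, Measurable (g i)) {a b c d : ι} (hab : a ≠ b) (hac : a ≠ c) (had : a ≠ d) :
    IndepFun (g a) (fun ω => g b ω * g c ω * g d ω) μ := by
  have hdisj : Disjoint ({a} : Finset ι) {b, c, d} := by simp [hab, hac, had]
  refine (hindep.indepFun_finset _ _ hdisj hmeas).comp (φ := fun x => x ⟨a, by simp⟩)
    (ψ := fun y => y ⟨b, by simp⟩ * y ⟨c, by simp⟩ * y ⟨d, by simp⟩) ?_ ?_ <;> fun_prop

section IndependentRademacher

variable {Ω ι : Type*} [MeasurableSpace Ω] {μ : Measure Ω} [IsProbabilityMeasure μ]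
  {g : ι → Ω → ℝ} (hmeas : ∀ i, Measurable (g i)) (hlaw₁ : ∀ i, μ {ω | g i ω = 1} = 1 / 2)
  (hlaw₂ : ∀ i, μ {ω | g i ω = -1} = 1 / 2)
include hmeas hlaw₁ hlaw₂

theorem integrable_mul_mul_mul_of_rademacher (a b c d : ι) :
    Integrable (fun ω => g a ω * g b ω * g c ω * g d ω) μ := by
  refine .of_bound (by fun_prop) 1 ?_
  have hae i := ae_eq_one_or_eq_neg_one_of_rademacher (hmeas i) (hlaw₁ i) (hlaw₂ i)
  filter_upwards [hae a, hae b, hae c, hae d] with ω ha hb hc hd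
  rcases ha with ha | ha <;> rcases hb with hb | hb <;> rcases hc with hc | hc <;>
    rcases hd with hd | hd <;> norm_num [ha, hb, hc, hd]

theorem integral_mul_mul_mul_of_rademacher [DecidableEq ι] (hindep : iIndepFun g μ)
    (i k l j : ι) :
    ∫ ω, g i ω * g k ω * g l ω * g j ω ∂μ
      = if (i = k ∧ l = j) ∨ (i = l ∧ k = j) ∨ (i = j ∧ k = l) then 1 else 0 := by
  have hsq i := ae_mul_self_eq_one_of_rademacher (hmeas i) (hlaw₁ i) (hlaw₂ i)
  split_ifs with hpair
  · have hone : (fun ω => g i ω * g k ω * g l ω * g j ω) =ᵐ[μ] fun _ => 1 := by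
      filter_upwards [hsq i, hsq k, hsq l] with ω hi hk hl
      rcases hpair with ⟨rfl, rfl⟩ | ⟨rfl, rfl⟩ | ⟨rfl, rfl⟩
      · linear_combination g l ω * g l ω * hi + hl
      · linear_combination g k ω * g k ω * hi + hk
      · linear_combination g k ω * g k ω * hi + hk
    simp [integral_congr_ae hone]
  · have hsingle : (i ≠ k ∧ i ≠ l ∧ i ≠ j) ∨ (k ≠ i ∧ k ≠ l ∧ k ≠ j) ∨
        (l ≠ i ∧ l ≠ k ∧ l ≠ j) ∨ (j ≠ i ∧ j ≠ k ∧ j ≠ l) := by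
      grind
    have hvanish {a b c d : ι} (hab : a ≠ b) (hac : a ≠ c) (had : a ≠ d)
        (hperm : ∀ ω, g i ω * g k ω * g l ω * g j ω = g a ω * (g b ω * g c ω * g d ω)) :
        ∫ ω, g i ω * g k ω * g l ω * g j ω ∂μ = 0 := by
      simp_rw [hperm]
      rw [(hindep.indepFun_mul_mul_of_ne hmeas hab hac had).integral_fun_mul_eq_mul_integral
        (by fun_prop) (by fun_prop), integral_eq_zero_of_rademacher (hmeas a) (hlaw₁ a) (hlaw₂ a),
        zero_mul]
    rcases hsingle with ⟨h₁, h₂, h₃⟩ | ⟨h₁, h₂, h₃⟩ | ⟨h₁, h₂, h₃⟩ | ⟨h₁, h₂, h₃⟩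
    all_goals exact hvanish h₁ h₂ h₃ fun ω => by ring

end IndependentRademacher

theorem diagonal_mul_mul_diagonal_mul_mul_diagonal_mul_mul_diagonal_apply
    {R ι : Type*} [CommSemiring R] [Fintype ι] [DecidableEq ι] (d : ι → R) (A B C : Matrix ι ι R)
    (i j : ι) :
    (diagonal d * A * diagonal d * B * diagonal d * C * diagonal d) i j
      = ∑ k, ∑ l, A i k * B k l * C l j * (d i * d k * d l * d j) := by
  simp only [mul_apply, diagonal_apply, ite_mul, zero_mul, mul_ite, mul_zero,
    Finset.sum_ite_eq, Finset.sum_ite_eq', Finset.mem_univ, if_true, Finset.sum_mul]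
  rw [Finset.sum_comm]
  exact Finset.sum_congr rfl fun k _ => Finset.sum_congr rfl fun l _ => by ring

theorem sum_sum_mul_ite_pairing {ι R : Type*} [Fintype ι] [DecidableEq ι] [CommSemiring R]
    {A B : Matrix ι ι R} (hA : A.IsSymm) (hB : B.IsSymm) (i j : ι) :
    ∑ k, ∑ l, A i k * B k l * A l j *
        (if (i = k ∧ l = j) ∨ (i = l ∧ k = j) ∨ (i = j ∧ k = l) then 1 else 0)
      = if i = j then ∑ k, A i k ^ 2 * B k k else (A i i * A j j + A i j ^ 2) * B i j := by
  split_ifs with hij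
  · subst hij
    have hterm (k l : ι) : A i k * B k l * A l i *
        (if (i = k ∧ l = i) ∨ (i = l ∧ k = i) ∨ (i = i ∧ k = l) then 1 else 0)
          = if k = l then A i k ^ 2 * B k k else 0 := by
      by_cases hkl : k = l
      · subst hkl
        rw [if_pos (Or.inr (Or.inr ⟨rfl, rfl⟩)), if_pos rfl, hA.apply k i]
        ring
      rw [if_neg (by grind), if_neg hkl, mul_zero]
    rw [Finset.sum_congr rfl fun k _ => Finset.sum_congr rfl fun l _ => hterm k l]
    simp
  · have hterm (k l : ι) : A i k * B k l * A l j *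
        (if (i = k ∧ l = j) ∨ (i = l ∧ k = j) ∨ (i = j ∧ k = l) then 1 else 0)
          = (if k = i ∧ l = j then A i i * A j j * B i j else 0)
            + if k = j ∧ l = i then A i j ^ 2 * B i j else 0 := by
      by_cases h₁ : k = i ∧ l = j
      · obtain ⟨rfl, rfl⟩ := h₁
        rw [if_pos (Or.inl ⟨rfl, rfl⟩), if_pos ⟨rfl, rfl⟩, if_neg fun h => hij h.1]
        ring
      by_cases h₂ : k = j ∧ l = i
      · obtain ⟨rfl, rfl⟩ := h₂
        rw [if_pos (Or.inr (Or.inl ⟨rfl, rfl⟩)), if_neg fun h => hij h.2, if_pos ⟨rfl, rfl⟩,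
          hB.apply k l]
        ring
      rw [if_neg (by grind), if_neg h₁, if_neg h₂, mul_zero, add_zero]
    rw [Finset.sum_congr rfl fun k _ => Finset.sum_congr rfl fun l _ => hterm k l]
    simp [Finset.sum_add_distrib, ite_and, add_mul]

/-- If `G` is a random `n × n` diagonal matrix with i.i.d. Rademacher diagonal entries and
`A, B` are fixed symmetric matrices, then the `(i,j)` entry of `E[G A G B G A G]` equals
`(A i i * A j j + (A i j)^2) * B i j` for `i ≠ j`, and `∑ k, (A i k)^2 * B k k` for `i = j`. -/
theorem expectation_GAGBGAG_entry
    {Ω : Type*} [MeasurableSpace Ω] (μ : Measure Ω) [IsProbabilityMeasure μ]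
    {n : ℕ} (g : Fin n → Ω → ℝ) (hmeas : ∀ i, Measurable (g i))
    (hindep : iIndepFun g μ)
    (hlaw₁ : ∀ i, μ {ω | g i ω = 1} = 1 / 2)
    (hlaw₂ : ∀ i, μ {ω | g i ω = -1} = 1 / 2)
    (A B : Matrix (Fin n) (Fin n) ℝ) (hA : A.IsSymm) (hB : B.IsSymm) :
    ∀ i j, (∫ ω, (Matrix.diagonal (fun k => g k ω) * A * Matrix.diagonal (fun k => g k ω) * B *
          Matrix.diagonal (fun k => g k ω) * A * Matrix.diagonal (fun k => g k ω)) i j ∂μ)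
      = if i = j then ∑ k, (A i k) ^ 2 * B k k
        else (A i i * A j j + (A i j) ^ 2) * B i j := by
  intro i j
  have hint (k l : Fin n) : Integrable (fun ω => A i k * B k l * A l j *
      (g i ω * g k ω * g l ω * g j ω)) μ :=
    (integrable_mul_mul_mul_of_rademacher hmeas hlaw₁ hlaw₂ i k l j).const_mul _
  calc _ = ∑ k, ∑ l, A i k * B k l * A l j * ∫ ω, g i ω * g k ω * g l ω * g j ω ∂μ := by
        simp_rw [diagonal_mul_mul_diagonal_mul_mul_diagonal_mul_mul_diagonal_apply]
        rw [integral_finsetSum _ fun k _ => integrable_finsetSum _ fun l _ => hint k l]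
        refine Finset.sum_congr rfl fun k _ => ?_
        rw [integral_finsetSum _ fun l _ => hint k l]
        simp_rw [integral_const_mul]
    _ = _ := by
        simp_rw [integral_mul_mul_mul_of_rademacher hmeas hlaw₁ hlaw₂ hindep]
        exact sum_sum_mul_ite_pairing hA hB i j
end

section
/- Let A be an n×n projection matrix of rank k, let B ∈ ℝ^{n×n} satisfy BBᵀ ⪯ c₀ I_n for some c₀ > 0, let ε have independent coordinates with mean zero, variance one, and finite fourth moments, and let G be an independent diagonal matrix with i.i.d. Rademacher entries. Then E[‖A G B ε‖⁴] ≤ c₀² k² + (2 + max_i E[ε_i⁴])·c₀² k. -/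
/-!
Fix the signs `G`. Then `A G B ε = M ε` with `M = A G B`, and `‖M ε‖⁴ = (εᵀ S ε)²` for
`S = MᵀM`. Expanding the square and using independence of the coordinates of `ε` gives
`E (εᵀ S ε)² = (tr S)² + 2 tr S² + ∑ᵢ Sᵢᵢ² (E εᵢ⁴ - 3) ≤ (tr S)² + (2 + m₄) tr S²`.
Since `G² = 1`, `(A G)(A G)ᵀ = A`, so `B Bᵀ ⪯ c₀ 1` gives `M Mᵀ ⪯ c₀ A`. Hence
`tr S ≤ c₀ tr A = c₀ k`, and, as `A M = M`, `tr S² ≤ c₀ tr S ≤ c₀² k`. Independence of `G` and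
`ε` allows integrating over `ε` first with `G` held fixed.
-/

open MeasureTheory ProbabilityTheory Matrix

noncomputable def vecNorm {n : ℕ} (v : Fin n → ℝ) : ℝ :=
  Real.sqrt (∑ i, v i ^ 2)

theorem vecNorm_pow_four {n : ℕ} (v : Fin n → ℝ) : vecNorm v ^ 4 = (v ⬝ᵥ v) ^ 2 := by
  rw [vecNorm, show 4 = 2 * 2 from rfl, pow_mul, Real.sq_sqrt (by positivity)]
  simp only [dotProduct, sq]

theorem Multiset.prod_map_eq_prod_pow_count {ι M : Type*} [Fintype ι] [DecidableEq ι]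
    [CommMonoid M] (s : Multiset ι) (y : ι → M) : (s.map y).prod = ∏ r, y r ^ s.count r := by
  rw [Finset.prod_multiset_map_count]
  exact Finset.prod_subset (Finset.subset_univ _)
    fun r _ hr => by rw [Multiset.count_eq_zero_of_notMem (by simpa using hr), pow_zero]

namespace Matrix

variable {ι κ l : Type*} [Fintype ι] [Fintype κ] [Fintype l]

theorem dotProduct_mulVec_self (M : Matrix κ ι ℝ) (y : ι → ℝ) :
    (M *ᵥ y) ⬝ᵥ (M *ᵥ y) = y ⬝ᵥ (Mᵀ * M) *ᵥ y := by
  rw [← mulVec_mulVec, dotProduct_mulVec y, vecMul_transpose]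

theorem sq_dotProduct_mulVec_eq_sum (S : Matrix ι ι ℝ) (y : ι → ℝ) :
    (y ⬝ᵥ S *ᵥ y) ^ 2 =
      ∑ i, ∑ j, ∑ p, ∑ q, S i j * S p q * (({i, j, p, q} : Multiset ι).map y).prod := by
  have hQ : y ⬝ᵥ S *ᵥ y = ∑ i, ∑ j, S i j * (y i * y j) := by
    simp only [dotProduct, mulVec, Finset.mul_sum]
    exact Finset.sum_congr rfl fun i _ => Finset.sum_congr rfl fun j _ => by ring
  rw [sq, hQ]
  simp_rw [Finset.sum_mul, Finset.mul_sum]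
  refine Finset.sum_congr rfl fun i _ => Finset.sum_congr rfl fun j _ =>
    Finset.sum_congr rfl fun p _ => Finset.sum_congr rfl fun q _ => ?_
  simp only [Multiset.insert_eq_cons, Multiset.map_cons, Multiset.prod_cons,
    Multiset.map_singleton, Multiset.prod_singleton]
  ring

theorem sq_le_mul_transpose_apply_self (S : Matrix ι ι ℝ) (i : ι) : S i i ^ 2 ≤ (S * Sᵀ) i i := by
  simp only [mul_apply, transpose_apply, ← sq]
  exact Finset.single_le_sum (fun j _ => sq_nonneg (S i j)) (Finset.mem_univ i)

theorem trace_eq_rank_of_isIdempotentElem [DecidableEq ι] {K : Type*} [Field K]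
    {A : Matrix ι ι K} (hA : IsIdempotentElem A) : A.trace = A.rank := by
  have he : IsIdempotentElem A.mulVecLin := by
    rw [IsIdempotentElem, Module.End.mul_eq_comp, ← mulVecLin_mul, hA.eq]
  rw [rank, ← (LinearMap.IsIdempotentElem.isProj_range _ he).trace,
    LinearMap.trace_eq_matrix_trace K (Pi.basisFun K ι), LinearMap.toMatrix_eq_toMatrix',
    ← toLin'_apply', LinearMap.toMatrix'_toLin']

theorem mul_diagonal_mul_transpose_self [DecidableEq ι] {R : Type*} [CommSemiring R]
    {A : Matrix ι ι R} (hA : A.IsSymm) (hAA : A * A = A) {x : ι → R}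
    (hx : ∀ i, x i * x i = 1) : A * diagonal x * (A * diagonal x)ᵀ = A := by
  rw [transpose_mul, diagonal_transpose, hA.eq, Matrix.mul_assoc,
    ← Matrix.mul_assoc (diagonal x), diagonal_mul_diagonal,
    show (fun i => x i * x i) = fun _ => 1 from funext hx, diagonal_one, Matrix.one_mul, hAA]

theorem posSemidef_smul_sub_mul_mul_transpose [DecidableEq ι] {c : ℝ} {A : Matrix κ κ ℝ}
    {C : Matrix κ ι ℝ} {B : Matrix ι l ℝ} (hB : (c • (1 : Matrix ι ι ℝ) - B * Bᵀ).PosSemidef)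
    (hC : C * Cᵀ = A) : (c • A - C * B * (C * B)ᵀ).PosSemidef := by
  convert hB.mul_mul_conjTranspose_same C using 1
  rw [conjTranspose_eq_transpose_of_trivial, Matrix.mul_sub, Matrix.sub_mul, Matrix.mul_smul,
    Matrix.mul_one, Matrix.smul_mul, hC, transpose_mul]
  simp only [Matrix.mul_assoc]

theorem trace_transpose_mul_self_le {c : ℝ} {A : Matrix κ κ ℝ} {M : Matrix κ ι ℝ}
    (h : (c • A - M * Mᵀ).PosSemidef) : (Mᵀ * M).trace ≤ c * A.trace := by
  have := h.trace_nonneg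
  rw [trace_sub, trace_smul, smul_eq_mul, trace_mul_comm] at this
  linarith

theorem trace_transpose_mul_self_mul_self_le {c : ℝ} {A : Matrix κ κ ℝ} {M : Matrix κ ι ℝ}
    (h : (c • A - M * Mᵀ).PosSemidef) (hAM : A * M = M) :
    (Mᵀ * M * (Mᵀ * M)).trace ≤ c * (Mᵀ * M).trace := by
  have := (h.conjTranspose_mul_mul_same M).trace_nonneg
  rw [conjTranspose_eq_transpose_of_trivial, Matrix.mul_sub, Matrix.sub_mul, Matrix.mul_smul,
    Matrix.smul_mul, Matrix.mul_assoc Mᵀ A, hAM, trace_sub, trace_smul, smul_eq_mul] at this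
  simp only [Matrix.mul_assoc] at this ⊢
  linarith

end Matrix

theorem integrable_pow_of_le {ν : Measure ℝ} [IsFiniteMeasure ν] {p q : ℕ} (hpq : p ≤ q)
    (h : Integrable (fun t : ℝ => t ^ q) ν) : Integrable (fun t : ℝ => t ^ p) ν := by
  have hnorm := integrable_norm_pow_of_le (f := id) aestronglyMeasurable_id hpq
    (by simpa only [id, norm_pow] using h.norm)
  exact (integrable_norm_iff (by fun_prop)).1 (by simpa only [id, norm_pow] using hnorm)

section QuadraticForm

variable {ι : Type*} [Fintype ι] [DecidableEq ι] (ν : ι → Measure ℝ)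
  [∀ i, IsProbabilityMeasure (ν i)]

theorem integral_pi_prod_map (s : Multiset ι) :
    ∫ y, (s.map y).prod ∂Measure.pi ν = ∏ r, ∫ t, t ^ s.count r ∂ν r := by
  simp_rw [Multiset.prod_map_eq_prod_pow_count]
  exact integral_fintype_prod_eq_prod (fun r t => t ^ s.count r)

theorem integrable_pi_prod_map (s : Multiset ι) {m : ℕ} (hs : ∀ r, s.count r ≤ m)
    (hint : ∀ i, Integrable (fun t : ℝ => t ^ m) (ν i)) :
    Integrable (fun y => (s.map y).prod) (Measure.pi ν) := by
  simp_rw [Multiset.prod_map_eq_prod_pow_count]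
  exact Integrable.fintype_prod_dep (f := fun r t => t ^ s.count r)
    fun r => integrable_pow_of_le (hs r) (hint r)

variable {ν}

theorem integral_pi_prod_map_four (hmean : ∀ i, ∫ t, t ∂ν i = 0)
    (hvar : ∀ i, ∫ t, t ^ 2 ∂ν i = 1) (i j p q : ι) :
    ∫ y, (({i, j, p, q} : Multiset ι).map y).prod ∂Measure.pi ν =
      (if i = j ∧ p = q then 1 else 0) + (if i = p ∧ j = q then 1 else 0)
      + (if i = q ∧ j = p then 1 else 0)
      + (if i = j ∧ i = p ∧ i = q then ∫ t, t ^ 4 ∂ν i - 3 else 0) := by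
  rw [integral_pi_prod_map,
    ← Finset.prod_subset (Finset.subset_univ ({i, j, p, q} : Multiset ι).toFinset)
      fun r _ hr => by rw [Multiset.count_eq_zero_of_notMem (by simpa using hr)]; simp]
  -- One branch per equality pattern of the indices: an index of multiplicity one contributes
  -- the mean `0`, one of multiplicity two the variance `1`. The `eq_comm` instances orient every
  -- equation between indices as in the `by_cases` hypotheses.
  by_cases hij : i = j <;> by_cases hip : i = p <;> by_cases hiq : i = q <;>
    by_cases hjp : j = p <;> by_cases hjq : j = q <;> by_cases hpq : p = q <;>
    simp_all [Finset.prod_insert, Multiset.count_cons, eq_comm (a := q) (b := i),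
      eq_comm (a := q) (b := j), eq_comm (a := q) (b := p), eq_comm (a := p) (b := i),
      eq_comm (a := p) (b := j), eq_comm (a := j) (b := i)]
  ring

theorem integrable_pi_prod_map_four (hint : ∀ i, Integrable (fun t : ℝ => t ^ 4) (ν i))
    (i j p q : ι) :
    Integrable (fun y => (({i, j, p, q} : Multiset ι).map y).prod) (Measure.pi ν) :=
  integrable_pi_prod_map ν _ (fun r => (Multiset.count_le_card r _).trans (by simp)) hint

theorem integrable_pi_sq_dotProduct_mulVec (hint : ∀ i, Integrable (fun t : ℝ => t ^ 4) (ν i))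
    (S : Matrix ι ι ℝ) : Integrable (fun y => (y ⬝ᵥ S *ᵥ y) ^ 2) (Measure.pi ν) := by
  have hmono := integrable_pi_prod_map_four hint
  simp_rw [sq_dotProduct_mulVec_eq_sum]
  fun_prop

theorem integral_pi_sq_dotProduct_mulVec (hmean : ∀ i, ∫ t, t ∂ν i = 0)
    (hvar : ∀ i, ∫ t, t ^ 2 ∂ν i = 1) (hint : ∀ i, Integrable (fun t : ℝ => t ^ 4) (ν i))
    (S : Matrix ι ι ℝ) :
    ∫ y, (y ⬝ᵥ S *ᵥ y) ^ 2 ∂Measure.pi ν = S.trace ^ 2 + (S * Sᵀ).trace + (S * S).trace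
      + ∑ i, S i i ^ 2 * (∫ t, t ^ 4 ∂ν i - 3) := by
  have hmono := integrable_pi_prod_map_four hint
  simp_rw [sq_dotProduct_mulVec_eq_sum]
  simp (disch := intros; fun_prop) only [integral_finsetSum, integral_const_mul,
    integral_pi_prod_map_four hmean hvar]
  simp [mul_add, Finset.sum_add_distrib, ite_and, trace, mul_apply, sq, Finset.sum_mul_sum]

theorem integral_pi_sq_dotProduct_mulVec_le (hmean : ∀ i, ∫ t, t ∂ν i = 0)
    (hvar : ∀ i, ∫ t, t ^ 2 ∂ν i = 1) (hint : ∀ i, Integrable (fun t : ℝ => t ^ 4) (ν i))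
    {m₄ : ℝ} (hm₄ : ∀ i, ∫ t, t ^ 4 ∂ν i ≤ m₄) {S : Matrix ι ι ℝ} (hS : S.IsSymm) :
    ∫ y, (y ⬝ᵥ S *ᵥ y) ^ 2 ∂Measure.pi ν ≤ S.trace ^ 2 + (2 + m₄) * (S * S).trace := by
  have hdiag : ∑ i, S i i ^ 2 * (∫ t, t ^ 4 ∂ν i - 3) ≤ m₄ * (S * S).trace := by
    rw [trace, Finset.mul_sum]
    refine Finset.sum_le_sum fun i _ => ?_
    have hSii := sq_le_mul_transpose_apply_self S i
    have h4 : 0 ≤ ∫ t, t ^ 4 ∂ν i := integral_nonneg fun t => by positivity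
    calc S i i ^ 2 * (∫ t, t ^ 4 ∂ν i - 3) ≤ S i i ^ 2 * ∫ t, t ^ 4 ∂ν i :=
          mul_le_mul_of_nonneg_left (by linarith) (sq_nonneg _)
      _ ≤ (S * Sᵀ) i i * m₄ := mul_le_mul hSii (hm₄ i) h4 ((sq_nonneg _).trans hSii)
      _ = m₄ * (S * S).diag i := by rw [hS.eq, mul_comm]; rfl
  rw [integral_pi_sq_dotProduct_mulVec hmean hvar hint, hS.eq]
  linarith

theorem integral_pi_sq_transpose_mul_self_le {κ : Type*} [Fintype κ]
    (hmean : ∀ i, ∫ t, t ∂ν i = 0) (hvar : ∀ i, ∫ t, t ^ 2 ∂ν i = 1)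
    (hint : ∀ i, Integrable (fun t : ℝ => t ^ 4) (ν i)) {m₄ : ℝ}
    (hm₄ : ∀ i, ∫ t, t ^ 4 ∂ν i ≤ m₄) (hm₄_nonneg : 0 ≤ m₄) {c : ℝ} (hc : 0 ≤ c)
    {A : Matrix κ κ ℝ} {M : Matrix κ ι ℝ} (hA : IsIdempotentElem A)
    (hM : (c • A - M * Mᵀ).PosSemidef) (hAM : A * M = M) :
    ∫ y, (y ⬝ᵥ (Mᵀ * M) *ᵥ y) ^ 2 ∂Measure.pi ν
      ≤ c ^ 2 * (A.rank : ℝ) ^ 2 + (2 + m₄) * c ^ 2 * A.rank := by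
  classical
  have htr := trace_transpose_mul_self_le hM
  rw [trace_eq_rank_of_isIdempotentElem hA] at htr
  have htr_nonneg : 0 ≤ (Mᵀ * M).trace := by
    simpa [conjTranspose_eq_transpose_of_trivial] using
      (posSemidef_conjTranspose_mul_self M).trace_nonneg
  calc ∫ y, (y ⬝ᵥ (Mᵀ * M) *ᵥ y) ^ 2 ∂Measure.pi ν
      ≤ (Mᵀ * M).trace ^ 2 + (2 + m₄) * (Mᵀ * M * (Mᵀ * M)).trace :=
        integral_pi_sq_dotProduct_mulVec_le hmean hvar hint hm₄
          (by rw [IsSymm, transpose_mul, transpose_transpose])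
    _ ≤ (c * A.rank) ^ 2 + (2 + m₄) * (c * (c * A.rank)) := by
        gcongr
        exact (trace_transpose_mul_self_mul_self_le hM hAM).trans
          (mul_le_mul_of_nonneg_left htr hc)
    _ = c ^ 2 * (A.rank : ℝ) ^ 2 + (2 + m₄) * c ^ 2 * A.rank := by ring

end QuadraticForm

section Independence

variable {Ω : Type*} [MeasurableSpace Ω] {μ : Measure Ω}

theorem iIndepFun.indepFun_sumElim {ι ι' β : Type*} [Fintype ι] [Fintype ι'] [MeasurableSpace β]
    [IsFiniteMeasure μ] {f : ι → Ω → β} {h : ι' → Ω → β} (hf : ∀ i, Measurable (f i))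
    (hh : ∀ j, Measurable (h j)) (hind : iIndepFun (Sum.elim f h) μ) :
    IndepFun (fun ω i => f i ω) (fun ω j => h j ω) μ := by
  have hmeas : ∀ s, Measurable (Sum.elim f h s) := Sum.forall.2 ⟨hf, hh⟩
  have hf_ind : iIndepFun f μ := iIndepFun.precomp (g := Sum.inl) Sum.inl_injective hind
  have hh_ind : iIndepFun h μ := iIndepFun.precomp (g := Sum.inr) Sum.inr_injective hind
  rw [indepFun_iff_map_prod_eq_prod_map_map (by fun_prop) (by fun_prop),
    hf_ind.map_fun_eq_pi_map (fun i => (hf i).aemeasurable),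
    hh_ind.map_fun_eq_pi_map (fun j => (hh j).aemeasurable)]
  have hsplit := (measurePreserving_sumPiEquivProdPi fun s => μ.map (Sum.elim f h s)).map_eq
  rwa [← hind.map_fun_eq_pi_map fun s => (hmeas s).aemeasurable,
    Measure.map_map (MeasurableEquiv.measurable _) (measurable_pi_lambda _ hmeas)] at hsplit

theorem ae_eq_one_or_eq_neg_one [IsProbabilityMeasure μ] {X : Ω → ℝ} (hX : Measurable X)
    (h₁ : μ {ω | X ω = 1} = 1 / 2) (h₂ : μ {ω | X ω = -1} = 1 / 2) :
    ∀ᵐ ω ∂μ, X ω = 1 ∨ X ω = -1 := by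
  have hm₂ : MeasurableSet {ω | X ω = -1} := hX (measurableSet_singleton (-1))
  have hdisj : Disjoint {ω | X ω = 1} {ω | X ω = -1} :=
    Set.disjoint_left.2 fun ω h₁ h₂ => by norm_num [show X ω = 1 from h₁] at h₂
  have hunion : μ {ω | X ω = 1 ∨ X ω = -1} = 1 := by
    rw [Set.ofPred_or, measure_union hdisj hm₂, h₁, h₂, ENNReal.add_halves]
  exact (prob_compl_eq_zero_iff (measurableSet_setOfPred.2 (by fun_prop))).2 hunion

theorem integral_comp_le_of_indepFun [IsProbabilityMeasure μ] {α β : Type*} [MeasurableSpace α]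
    [MeasurableSpace β] {X : Ω → α} {Y : Ω → β} (hX : Measurable X) (hY : Measurable Y)
    (hXY : IndepFun X Y μ) {F : α → β → ℝ} (hF : Measurable (Function.uncurry F))
    (hF₀ : ∀ x y, 0 ≤ F x y) {C : ℝ}
    (hC : ∀ᵐ ω ∂μ, Integrable (F (X ω)) (μ.map Y) ∧ ∫ y, F (X ω) y ∂μ.map Y ≤ C) :
    ∫ ω, F (X ω) (Y ω) ∂μ ≤ C := by
  have hC₀ : 0 ≤ C := by
    obtain ⟨ω, -, hω⟩ := hC.exists
    exact (integral_nonneg (hF₀ (X ω))).trans hω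
  have hlaw := (indepFun_iff_map_prod_eq_prod_map_map hX.aemeasurable hY.aemeasurable).1 hXY
  have hF' : Measurable fun z => ENNReal.ofReal (Function.uncurry F z) :=
    ENNReal.measurable_ofReal.comp hF
  rw [integral_eq_lintegral_of_nonneg_ae (ae_of_all _ fun ω => hF₀ _ _)
    (hF.comp (hX.prodMk hY)).aestronglyMeasurable]
  refine ENNReal.toReal_le_of_le_ofReal hC₀ ?_
  calc ∫⁻ ω, ENNReal.ofReal (F (X ω) (Y ω)) ∂μ
      = ∫⁻ z, ENNReal.ofReal (Function.uncurry F z) ∂(μ.map X).prod (μ.map Y) := by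
        rw [← hlaw, lintegral_map hF' (hX.prodMk hY)]
        rfl
    _ = ∫⁻ x, ∫⁻ y, ENNReal.ofReal (F x y) ∂μ.map Y ∂μ.map X := lintegral_prod _ hF'.aemeasurable
    _ = ∫⁻ ω, ∫⁻ y, ENNReal.ofReal (F (X ω) y) ∂μ.map Y ∂μ :=
        lintegral_map hF'.lintegral_prod_right' hX
    _ ≤ ∫⁻ _, ENNReal.ofReal C ∂μ := lintegral_mono_ae <| hC.mono fun ω ⟨hint, hle⟩ => by
        rw [← ofReal_integral_eq_lintegral_ofReal hint (ae_of_all _ (hF₀ _))]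
        exact ENNReal.ofReal_le_ofReal hle
    _ = ENNReal.ofReal C := by simp

theorem integrable_and_integral_sq_transpose_mul_self_le {ι κ : Type*} [Fintype ι]
    [DecidableEq ι] [Fintype κ] [IsProbabilityMeasure μ] {ε : ι → Ω → ℝ}
    (hε : ∀ i, Measurable (ε i)) (hind : iIndepFun ε μ) (hmean : ∀ i, ∫ ω, ε i ω ∂μ = 0)
    (hvar : ∀ i, ∫ ω, ε i ω ^ 2 ∂μ = 1) (hmom4 : ∀ i, Integrable (fun ω => ε i ω ^ 4) μ)
    {m₄ : ℝ} (hm₄ : ∀ i, ∫ ω, ε i ω ^ 4 ∂μ ≤ m₄) (hm₄_nonneg : 0 ≤ m₄) {c : ℝ} (hc : 0 ≤ c)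
    {A : Matrix κ κ ℝ} {M : Matrix κ ι ℝ} (hA : IsIdempotentElem A)
    (hM : (c • A - M * Mᵀ).PosSemidef) (hAM : A * M = M) :
    Integrable (fun y => (y ⬝ᵥ (Mᵀ * M) *ᵥ y) ^ 2) (μ.map fun ω i => ε i ω) ∧
      ∫ y, (y ⬝ᵥ (Mᵀ * M) *ᵥ y) ^ 2 ∂μ.map (fun ω i => ε i ω)
        ≤ c ^ 2 * (A.rank : ℝ) ^ 2 + (2 + m₄) * c ^ 2 * A.rank := by
  have (i : ι) : IsProbabilityMeasure (μ.map (ε i)) :=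
    Measure.isProbabilityMeasure_map (hε i).aemeasurable
  have hmoment (i : ι) (m : ℕ) : ∫ t, t ^ m ∂μ.map (ε i) = ∫ ω, ε i ω ^ m ∂μ :=
    integral_map (hε i).aemeasurable (by fun_prop)
  have hint (i : ι) : Integrable (fun t : ℝ => t ^ 4) (μ.map (ε i)) :=
    (integrable_map_measure (by fun_prop) (hε i).aemeasurable).2 (hmom4 i)
  rw [hind.map_fun_eq_pi_map fun i => (hε i).aemeasurable]
  exact ⟨integrable_pi_sq_dotProduct_mulVec hint _, integral_pi_sq_transpose_mul_self_le
    (fun i => (integral_map (hε i).aemeasurable aestronglyMeasurable_id).trans (hmean i))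
    (fun i => (hmoment i 2).trans (hvar i)) hint (fun i => (hmoment i 4).trans_le (hm₄ i))
    hm₄_nonneg hc hA hM hAM⟩

end Independence

/-- Fourth-moment bound: if `A` is a projection matrix of rank `k`, `B Bᵀ ⪯ c₀ I`, the
coordinates of `ε` are independent with mean zero, variance one and fourth moments at most
`m₄`, and `G` is an independent diagonal matrix of i.i.d. Rademacher signs, then
`E ‖A G B ε‖⁴ ≤ c₀² k² + (2 + m₄) c₀² k`. -/
theorem fourth_moment_bound_AGBeps
    {Ω : Type*} [MeasurableSpace Ω] (μ : Measure Ω) [IsProbabilityMeasure μ]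
    {n k : ℕ} (A : Matrix (Fin n) (Fin n) ℝ) (hAsymm : A.IsSymm) (hAidem : A * A = A)
    (hArank : A.rank = k)
    (B : Matrix (Fin n) (Fin n) ℝ) (c₀ : ℝ) (hc₀ : 0 < c₀)
    (hB : (c₀ • (1 : Matrix (Fin n) (Fin n) ℝ) - B * Bᵀ).PosSemidef)
    (g ε : Fin n → Ω → ℝ)
    (hgmeas : ∀ i, Measurable (g i)) (hεmeas : ∀ i, Measurable (ε i))
    (hindep : iIndepFun (Sum.elim g ε : Fin n ⊕ Fin n → Ω → ℝ) μ)
    (hlaw₁ : ∀ i, μ {ω | g i ω = 1} = 1 / 2)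
    (hlaw₂ : ∀ i, μ {ω | g i ω = -1} = 1 / 2)
    (hmean : ∀ i, ∫ ω, ε i ω ∂μ = 0)
    (hvar : ∀ i, ∫ ω, (ε i ω) ^ 2 ∂μ = 1)
    (m₄ : ℝ) (hmom4 : ∀ i, Integrable (fun ω => (ε i ω) ^ 4) μ)
    (hm₄ : ∀ i, ∫ ω, (ε i ω) ^ 4 ∂μ ≤ m₄) :
    (∫ ω, vecNorm ((A * Matrix.diagonal (fun i => g i ω) * B).mulVec (fun i => ε i ω)) ^ 4 ∂μ)
      ≤ c₀ ^ 2 * (k : ℝ) ^ 2 + (2 + m₄) * c₀ ^ 2 * (k : ℝ) := by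
  rcases isEmpty_or_nonempty (Fin n) with hn | ⟨⟨i₀⟩⟩
  · obtain rfl : k = 0 := by rw [← hArank, Subsingleton.elim A 0, rank_zero]
    simp [vecNorm]
  have hm₄_nonneg : 0 ≤ m₄ := (integral_nonneg fun ω => by positivity).trans (hm₄ i₀)
  have hsign : ∀ᵐ ω ∂μ, ∀ i, g i ω = 1 ∨ g i ω = -1 :=
    ae_all_iff.2 fun i => ae_eq_one_or_eq_neg_one (hgmeas i) (hlaw₁ i) (hlaw₂ i)
  simp_rw [vecNorm_pow_four, dotProduct_mulVec_self]
  refine integral_comp_le_of_indepFun (by fun_prop) (by fun_prop)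
    (iIndepFun.indepFun_sumElim hgmeas hεmeas hindep)
    (F := fun x y => (y ⬝ᵥ ((A * diagonal x * B)ᵀ * (A * diagonal x * B)) *ᵥ y) ^ 2)
    (by fun_prop) (fun _ _ => sq_nonneg _) ?_
  filter_upwards [hsign] with ω hω
  have hsq (i : Fin n) : g i ω * g i ω = 1 := by rcases hω i with h | h <;> simp [h]
  have hM := posSemidef_smul_sub_mul_mul_transpose hB
    (mul_diagonal_mul_transpose_self hAsymm hAidem hsq)
  rw [← hArank]
  exact integrable_and_integral_sq_transpose_mul_self_le hεmeas
    (iIndepFun.precomp (g := Sum.inr) Sum.inr_injective hindep) hmean hvar hmom4 hm₄ hm₄_nonneg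
    hc₀.le hAidem hM (by simp only [← Matrix.mul_assoc, hAidem])
end

section
/- Let ε be symmetric errors (gε distributed as ε for all diagonal sign-flip matrices g), t a measurable statistic, and G_1,…,G_R i.i.d. uniform over the group of n×n diagonal ±1 matrices, independent of ε. Define pval = (1/(R+1))·(1 + ∑_{r=1}^R 1{t(G_r ε) ≥ t(ε)}). Then P(pval ≤ α) ≤ α for every α ∈ (0,1]. -/
/-!
Let `ν` be the law of `ε`, invariant under the finite group `G` of sign flips. For
`u = (u₀, …, u_R) ∈ G^(R+1)` and a point `x`, call the upper rank of an index `i` the number of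
`j` with `t (u_i • x) ≤ t (u_j • x)`; then `pval ≤ α` says that, for `u = (1, G₁, …, G_R)`, index
`0` has upper rank at most `k = ⌊α (R + 1)⌋`. By independence the probability of this event is
the average over `w ∈ G^R` of `ν {rank₀(1, w) ≤ k}`. Since `ν` is invariant, `(1, w)` may be
replaced by `(g, w g)`, so this is also the average over all `u ∈ G^(R+1)`, where the `R + 1`
indices are exchangeable. For fixed `u` and `x` at most `k` indices have upper rank at most `k`,
so the probability is at most `k / (R + 1) ≤ α`.
-/

open MeasureTheory ProbabilityTheory Finset

section Probability

variable {Ω : Type*} [MeasurableSpace Ω] {μ : Measure Ω}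

lemma ProbabilityTheory.IndepFun.measure_mem_eq_sum {F E : Type*} [Fintype F] [MeasurableSpace F]
    [MeasurableSingletonClass F] [MeasurableSpace E] {B : Ω → F} {X : Ω → E}
    (hB : Measurable B) (hX : Measurable X) (hBX : IndepFun B X μ) {S : F → Set E}
    (hS : ∀ v, MeasurableSet (S v)) :
    μ {ω | X ω ∈ S (B ω)} = ∑ v, μ (B ⁻¹' {v}) * μ.map X (S v) := by
  have hunion : {ω | X ω ∈ S (B ω)} = ⋃ v, B ⁻¹' {v} ∩ X ⁻¹' S v := by ext ω; simp
  rw [hunion, measure_iUnion, tsum_fintype]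
  · refine Finset.sum_congr rfl fun v _ => ?_
    rw [hBX.measure_inter_preimage_eq_mul _ _ (measurableSet_singleton v) (hS v),
      Measure.map_apply hX (hS v)]
  · exact fun v w hvw => ((Set.disjoint_singleton.2 hvw).preimage B).mono
      Set.inter_subset_left Set.inter_subset_left
  · exact fun v => (hB (measurableSet_singleton v)).inter (hX (hS v))

lemma ProbabilityTheory.iIndepFun.measure_preimage_singleton_of_map_eq_uniform
    {ι F : Type*} [Fintype ι] [Fintype F] [Nonempty F] [MeasurableSpace F]
    [MeasurableSingletonClass F] {b : ι → Ω → F} (hb : ∀ i, Measurable (b i))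
    (hindep : iIndepFun b μ) (hlaw : ∀ i, μ.map (b i) = (PMF.uniformOfFintype F).toMeasure)
    (v : ι → F) :
    μ ((fun ω i => b i ω) ⁻¹' {v}) = (Fintype.card F : ENNReal)⁻¹ ^ Fintype.card ι := by
  have hatom i : μ (b i ⁻¹' {v i}) = (Fintype.card F : ENNReal)⁻¹ := by
    rw [← Measure.map_apply (hb i) (measurableSet_singleton _), hlaw,
      PMF.toMeasure_apply_singleton _ _ (measurableSet_singleton _), PMF.uniformOfFintype_apply]
  have hpre : (fun ω i => b i ω) ⁻¹' {v} = ⋂ i ∈ Finset.univ, b i ⁻¹' {v i} := by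
    ext ω; simp [funext_iff]
  rw [hpre, hindep.measure_inter_preimage_eq_mul _ fun i _ => measurableSet_singleton (v i)]
  simp [hatom]

lemma MeasureTheory.smulInvariantMeasure_map_of_map_smul_eq {G E : Type*} [Group G]
    [MulAction G E] [MeasurableSpace E] [MeasurableConstSMul G E] {X : Ω → E}
    (hX : Measurable X) (h : ∀ g : G, μ.map (fun ω => g • X ω) = μ.map X) :
    SMulInvariantMeasure G E (μ.map X) :=
  ((smulInvariantMeasure_tfae G (μ.map X)).out 0 5).2 fun g => by
    rw [Measure.map_map (measurable_const_smul g) hX]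
    exact h g

end Probability

lemma inv_mul_le_iff_le_floor {a : ℝ} (ha : 0 ≤ a) (R N : ℕ) :
    ((R : ℝ) + 1)⁻¹ * N ≤ a ↔ N ≤ ⌊a * (R + 1)⌋₊ := by
  rw [inv_mul_le_iff₀ (by positivity), Nat.le_floor_iff (by positivity), mul_comm]

lemma ENNReal.inv_pow_mul_le_ofReal {c s : ENNReal} (hc₀ : c ≠ 0) (hc : c ≠ ⊤) {R : ℕ} {a : ℝ}
    (ha : 0 ≤ a) (h : (R + 1) * s ≤ c ^ R * ⌊a * (R + 1)⌋₊) : c⁻¹ ^ R * s ≤ ENNReal.ofReal a := by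
  have hfloor : (⌊a * (R + 1)⌋₊ : ENNReal) ≤ (R + 1) * ENNReal.ofReal a :=
    calc (⌊a * (R + 1)⌋₊ : ENNReal) = ENNReal.ofReal ⌊a * (R + 1)⌋₊ :=
          (ENNReal.ofReal_natCast _).symm
      _ ≤ ENNReal.ofReal (a * (R + 1)) := ENNReal.ofReal_le_ofReal (Nat.floor_le (by positivity))
      _ = (R + 1) * ENNReal.ofReal a := by
          rw [ENNReal.ofReal_mul ha, mul_comm]
          congr
          exact_mod_cast ENNReal.ofReal_natCast (R + 1)
  have hcancel : c⁻¹ ^ R * c ^ R = 1 := by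
    rw [← ENNReal.inv_pow]
    exact ENNReal.inv_mul_cancel (pow_ne_zero R hc₀) (ENNReal.pow_ne_top hc)
  refine (ENNReal.mul_le_mul_iff_right (a := (R + 1 : ENNReal)) (by positivity) (by simp)).1 ?_
  calc (R + 1) * (c⁻¹ ^ R * s) = c⁻¹ ^ R * ((R + 1) * s) := by ring
    _ ≤ c⁻¹ ^ R * (c ^ R * ⌊a * (R + 1)⌋₊) := by gcongr
    _ = ⌊a * (R + 1)⌋₊ := by rw [← mul_assoc, hcancel, one_mul]
    _ ≤ (R + 1) * ENNReal.ofReal a := hfloor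

theorem card_filter_card_filter_le_le {ι α : Type*} [Fintype ι] [LinearOrder α]
    (T : ι → α) (k : ℕ) : #{i | #{j | T i ≤ T j} ≤ k} ≤ k := by
  rcases (univ.filter fun i => #{j | T i ≤ T j} ≤ k).eq_empty_or_nonempty with hempty | hne
  · simp [hempty]
  -- every index of the set lies above its `T`-minimiser, which has at most `k` indices above it
  obtain ⟨i₀, hi₀, hmin⟩ := exists_min_image _ T hne
  calc _ ≤ #{j | T i₀ ≤ T j} := card_le_card fun i hi => by simpa using hmin i hi
    _ ≤ k := (mem_filter.1 hi₀).2

namespace RandomizationTest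

variable {G X ι : Type*} [Group G] [MulAction G X] [Fintype ι] (t : X → ℝ)

noncomputable def upperRank (u : ι → G) (i : ι) (x : X) : ℕ :=
  #{j | t (u i • x) ≤ t (u j • x)}

lemma upperRank_mul_const (u : ι → G) (g : G) (i : ι) (x : X) :
    upperRank t (fun j => u j * g) i x = upperRank t u i (g • x) := by
  simp only [upperRank, mul_smul]

lemma upperRank_comp_equiv (u : ι → G) (e : ι ≃ ι) (i : ι) (x : X) :
    upperRank t (u ∘ e) i x = upperRank t u (e i) x :=
  card_equiv e (by simp)

lemma card_upperRank_le_le (u : ι → G) (x : X) (k : ℕ) :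
    #{i | upperRank t u i x ≤ k} ≤ k :=
  card_filter_card_filter_le_le (fun j => t (u j • x)) k

lemma upperRank_cons_one {R : ℕ} (w : Fin R → G) (x : X) :
    upperRank t (Fin.cons 1 w : Fin (R + 1) → G) 0 x = 1 + #{r | t x ≤ t (w r • x)} := by
  rw [upperRank, card_filter, Fin.sum_univ_succ, card_filter]
  simp

variable [MeasurableSpace X]

lemma measurable_upperRank [MeasurableConstSMul G X] (ht : Measurable t) (u : ι → G) (i : ι) :
    Measurable (upperRank t u i) := by
  unfold upperRank
  simp only [card_filter]
  exact Finset.measurable_sum _ fun j _ => Measurable.ite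
    (measurableSet_le (ht.comp (measurable_const_smul _)) (ht.comp (measurable_const_smul _)))
    measurable_const measurable_const

lemma measurableSet_one_add_card_le [MeasurableConstSMul G X] (ht : Measurable t) {R : ℕ}
    (w : Fin R → G) (k : ℕ) : MeasurableSet {x | 1 + #{r | t x ≤ t (w r • x)} ≤ k} := by
  simp only [← upperRank_cons_one]
  exact measurable_upperRank t ht _ 0 measurableSet_Iic

variable (ν : Measure X)

lemma sum_measure_upperRank_le_le [MeasurableConstSMul G X] (ht : Measurable t) (u : ι → G)
    (k : ℕ) : ∑ i, ν {x | upperRank t u i x ≤ k} ≤ k * ν Set.univ := by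
  have hmeas i : MeasurableSet {x | upperRank t u i x ≤ k} :=
    measurable_upperRank t ht u i measurableSet_Iic
  calc ∑ i, ν {x | upperRank t u i x ≤ k}
      = ∫⁻ x, ∑ i, {x | upperRank t u i x ≤ k}.indicator 1 x ∂ν := by
        rw [lintegral_finsetSum _ fun i _ => measurable_one.indicator (hmeas i)]
        simp only [lintegral_indicator_one (hmeas _)]
    _ = ∫⁻ x, (#{i | upperRank t u i x ≤ k} : ENNReal) ∂ν := by
        simp [Set.indicator_apply, Finset.sum_boole]
    _ ≤ ∫⁻ _, (k : ENNReal) ∂ν :=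
        lintegral_mono fun x => Nat.cast_le.mpr (card_upperRank_le_le t u x k)
    _ = k * ν Set.univ := lintegral_const _

lemma measure_upperRank_mul_const_le [SMulInvariantMeasure G X ν] (u : ι → G) (g : G) (i : ι)
    (k : ℕ) : ν {x | upperRank t (fun j => u j * g) i x ≤ k} = ν {x | upperRank t u i x ≤ k} := by
  simp only [upperRank_mul_const]
  exact measure_preimage_smul ν g {x | upperRank t u i x ≤ k}

variable [Fintype G] [DecidableEq ι]

lemma sum_measure_upperRank_le_eq (i j : ι) (k : ℕ) :
    ∑ u : ι → G, ν {x | upperRank t u i x ≤ k} = ∑ u : ι → G, ν {x | upperRank t u j x ≤ k} :=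
  Fintype.sum_equiv ((Equiv.swap i j).arrowCongr (Equiv.refl G)) _ _ fun u => by
    have hu : (Equiv.swap i j).arrowCongr (Equiv.refl G) u = u ∘ Equiv.swap i j := by
      ext; simp
    simp only [hu, upperRank_comp_equiv, Equiv.swap_apply_right]

lemma card_mul_sum_measure_upperRank_le_le [MeasurableConstSMul G X] (ht : Measurable t)
    (i₀ : ι) (k : ℕ) :
    Fintype.card ι * ∑ u : ι → G, ν {x | upperRank t u i₀ x ≤ k}
      ≤ Fintype.card G ^ Fintype.card ι * k * ν Set.univ :=
  calc (Fintype.card ι : ENNReal) * ∑ u : ι → G, ν {x | upperRank t u i₀ x ≤ k}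
      = ∑ i, ∑ u : ι → G, ν {x | upperRank t u i x ≤ k} := by
        simp [sum_measure_upperRank_le_eq t ν _ i₀ k]
    _ = ∑ u : ι → G, ∑ i, ν {x | upperRank t u i x ≤ k} := sum_comm
    _ ≤ ∑ _u : ι → G, (k * ν Set.univ) :=
        sum_le_sum fun u _ => sum_measure_upperRank_le_le t ν ht u k
    _ = Fintype.card G ^ Fintype.card ι * k * ν Set.univ := by
        simp [mul_assoc]

lemma sum_measure_upperRank_le_eq_card_mul [SMulInvariantMeasure G X ν] {R : ℕ} (k : ℕ) :
    ∑ u : Fin (R + 1) → G, ν {x | upperRank t u 0 x ≤ k}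
      = Fintype.card G * ∑ w : Fin R → G,
          ν {x | upperRank t (Fin.cons 1 w : Fin (R + 1) → G) 0 x ≤ k} := by
  rw [← Fintype.sum_equiv (Fin.consEquiv fun _ => G)
    (fun p => ν {x | upperRank t (Fin.cons p.1 p.2 : Fin (R + 1) → G) 0 x ≤ k}) _ fun _ => rfl,
    Fintype.sum_prod_type]
  have hcons (g : G) (w : Fin R → G) :
      ν {x | upperRank t (Fin.cons g w : Fin (R + 1) → G) 0 x ≤ k}
        = ν {x | upperRank t (Fin.cons 1 fun r => w r * g⁻¹ : Fin (R + 1) → G) 0 x ≤ k} := by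
    have hu : (Fin.cons g w : Fin (R + 1) → G)
        = fun j => (Fin.cons 1 fun r => w r * g⁻¹ : Fin (R + 1) → G) j * g := by
      funext j
      cases j using Fin.cases <;> simp
    rw [hu, measure_upperRank_mul_const_le]
  have hshift (g : G) := Fintype.sum_equiv (Equiv.piCongrRight fun _ : Fin R => Equiv.mulRight g⁻¹)
    (fun w => ν {x | upperRank t (Fin.cons 1 fun r => w r * g⁻¹ : Fin (R + 1) → G) 0 x ≤ k})
    (fun w => ν {x | upperRank t (Fin.cons 1 w : Fin (R + 1) → G) 0 x ≤ k}) fun _ => rfl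
  calc ∑ g : G, ∑ w : Fin R → G, ν {x | upperRank t (Fin.cons g w : Fin (R + 1) → G) 0 x ≤ k}
      = ∑ _g : G, ∑ w : Fin R → G,
          ν {x | upperRank t (Fin.cons 1 w : Fin (R + 1) → G) 0 x ≤ k} :=
        sum_congr rfl fun g _ => (sum_congr rfl fun w _ => hcons g w).trans (hshift g)
    _ = _ := by rw [sum_const, card_univ, nsmul_eq_mul]

theorem add_one_mul_sum_measure_le [MeasurableConstSMul G X] [SMulInvariantMeasure G X ν]
    (ht : Measurable t) (R k : ℕ) :
    (R + 1) * ∑ w : Fin R → G, ν {x | 1 + #{r | t x ≤ t (w r • x)} ≤ k}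
      ≤ Fintype.card G ^ R * k * ν Set.univ := by
  have hG : (Fintype.card G : ENNReal) ≠ 0 := by simp
  have h := card_mul_sum_measure_upperRank_le_le (G := G) t ν ht (0 : Fin (R + 1)) k
  simp only [sum_measure_upperRank_le_eq_card_mul, upperRank_cons_one, Fintype.card_fin] at h
  refine (ENNReal.mul_le_mul_iff_right hG (ENNReal.natCast_ne_top _)).1 ?_
  calc _ = ((R + 1 : ℕ) : ENNReal) * (Fintype.card G * ∑ w : Fin R → G,
          ν {x | 1 + #{r | t x ≤ t (w r • x)} ≤ k}) := by push_cast; ring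
    _ ≤ _ := h
    _ = _ := by ring

/-- Sign-flip matrices are modelled as `Fin n → ℤˣ` acting coordinatewise on `Fin n → ℝ`. -/
def boolSign : Bool ≃ ℤˣ where
  toFun b := if b then 1 else -1
  invFun u := decide (u = 1)
  left_inv b := by cases b <;> decide
  right_inv u := by rcases Int.units_eq_one_or u with rfl | rfl <;> decide

lemma signFlip_eq_smul {n : ℕ} (v : Fin n → Bool) (x : Fin n → ℝ) :
    (fun i => (if v i then (1 : ℝ) else -1) * x i) = (boolSign ∘ v) • x := by
  funext i
  by_cases hv : v i <;> simp [hv, boolSign, Units.smul_def]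

lemma smulInvariantMeasure_map_of_signFlip {Ω : Type*} [MeasurableSpace Ω] {μ : Measure Ω}
    {n : ℕ} {ε : Ω → Fin n → ℝ} (hε : Measurable ε)
    (hsym : ∀ v : Fin n → Bool,
      μ.map (fun ω i => (if v i then (1 : ℝ) else -1) * ε ω i) = μ.map ε) :
    SMulInvariantMeasure (Fin n → ℤˣ) (Fin n → ℝ) (μ.map ε) :=
  smulInvariantMeasure_map_of_map_smul_eq hε fun g => by
    have h := hsym (boolSign.symm ∘ g)
    rwa [funext fun ω => signFlip_eq_smul _ (ε ω), ← Function.comp_assoc,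
      Equiv.self_comp_symm, Function.id_comp] at h

theorem add_one_mul_sum_measure_signFlip_le {n : ℕ} (t : (Fin n → ℝ) → ℝ) (ht : Measurable t)
    (ν : Measure (Fin n → ℝ)) [SMulInvariantMeasure (Fin n → ℤˣ) (Fin n → ℝ) ν] (R k : ℕ) :
    (R + 1) * ∑ v : Fin R → Fin n → Bool, ν {x | 1 + #{r | t x ≤ t ((boolSign ∘ v r) • x)} ≤ k}
      ≤ Fintype.card (Fin n → Bool) ^ R * k * ν Set.univ := by
  have hsum : ∑ v : Fin R → Fin n → Bool,
        ν {x | 1 + #{r | t x ≤ t ((boolSign ∘ v r) • x)} ≤ k}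
      = ∑ w : Fin R → Fin n → ℤˣ, ν {x | 1 + #{r | t x ≤ t (w r • x)} ≤ k} :=
    Fintype.sum_equiv (.piCongrRight fun _ => .piCongrRight fun _ => boolSign) _ _ fun _ => rfl
  have hcard : Fintype.card (Fin n → ℤˣ) = Fintype.card (Fin n → Bool) :=
    Fintype.card_congr (.piCongrRight fun _ => boolSign.symm)
  rw [hsum, ← hcard]
  exact add_one_mul_sum_measure_le t ν ht R k

end RandomizationTest

open RandomizationTest

theorem monte_carlo_signflip_test_valid_general
    {Ω : Type*} [MeasurableSpace Ω] (μ : Measure Ω) [IsProbabilityMeasure μ]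
    {n R : ℕ} (ε : Ω → Fin n → ℝ) (hεmeas : Measurable ε)
    (hsym : ∀ v : Fin n → Bool,
      Measure.map (fun ω => fun i => (if v i then (1 : ℝ) else -1) * ε ω i) μ
        = Measure.map ε μ)
    (b : Fin R → Ω → (Fin n → Bool)) (hbmeas : ∀ r, Measurable (b r))
    (hbiid : iIndepFun b μ)
    (hblaw : ∀ r, Measure.map (b r) μ = (PMF.uniformOfFintype (Fin n → Bool)).toMeasure)
    (hbε : IndepFun (fun ω => fun r => b r ω) ε μ)
    (t : (Fin n → ℝ) → ℝ) (ht : Measurable t)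
    (pval : Ω → ℝ)
    (hpval : ∀ ω, pval ω = (R + 1 : ℝ)⁻¹ * (1 +
        ∑ r : Fin R,
          if t (ε ω) ≤ t (fun i => (if b r ω i then (1 : ℝ) else -1) * ε ω i)
          then (1 : ℝ) else 0))
    (α : ℝ) (hα₀ : 0 < α) :
    μ {ω | pval ω ≤ α} ≤ ENNReal.ofReal α := by
  set ν := μ.map ε
  have : IsProbabilityMeasure ν := Measure.isProbabilityMeasure_map hεmeas.aemeasurable
  have : SMulInvariantMeasure (Fin n → ℤˣ) (Fin n → ℝ) ν :=
    smulInvariantMeasure_map_of_signFlip hεmeas hsym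
  set S : (Fin R → Fin n → Bool) → Set (Fin n → ℝ) :=
    fun v => {x | 1 + #{r | t x ≤ t ((boolSign ∘ v r) • x)} ≤ ⌊α * (R + 1)⌋₊}
  have hevent : {ω | pval ω ≤ α} = {ω | ε ω ∈ S (fun r => b r ω)} := by
    ext ω
    simp only [S, Set.mem_ofPred_eq, hpval, signFlip_eq_smul, sum_boole]
    rw [← inv_mul_le_iff_le_floor hα₀.le, Nat.cast_add, Nat.cast_one]
  have hmc := add_one_mul_sum_measure_signFlip_le t ht ν R ⌊α * (R + 1)⌋₊
  rw [measure_univ, mul_one] at hmc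
  rw [hevent, hbε.measure_mem_eq_sum (measurable_pi_lambda _ hbmeas) hεmeas
    (S := S) fun v => measurableSet_one_add_card_le t ht _ _]
  simp only [hbiid.measure_preimage_singleton_of_map_eq_uniform hbmeas hblaw, ← mul_sum,
    Fintype.card_fin]
  exact ENNReal.inv_pow_mul_le_ofReal (by simp) (by simp) hα₀.le hmc

/-- Finite-sample validity of the Monte Carlo sign-flip randomization test: if `ε` is
sign-symmetric, `G₁, …, G_R` are i.i.d. uniform sign-flip matrices independent of `ε`
(encoded by i.i.d. uniform random sign patterns `b r : Ω → (Fin n → Bool)`), and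
`pval = (1/(R+1)) (1 + ∑_r 1{t(G_r ε) ≥ t(ε)})`, then `P(pval ≤ α) ≤ α` for `α ∈ (0, 1]`. -/
theorem monte_carlo_signflip_test_valid
    {Ω : Type*} [MeasurableSpace Ω] (μ : Measure Ω) [IsProbabilityMeasure μ]
    {n R : ℕ} (ε : Ω → Fin n → ℝ) (hεmeas : Measurable ε)
    (hsym : ∀ v : Fin n → Bool,
      Measure.map (fun ω => fun i => (if v i then (1 : ℝ) else -1) * ε ω i) μ
        = Measure.map ε μ)
    (b : Fin R → Ω → (Fin n → Bool)) (hbmeas : ∀ r, Measurable (b r))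
    (hbiid : iIndepFun b μ)
    (hblaw : ∀ r, Measure.map (b r) μ = (PMF.uniformOfFintype (Fin n → Bool)).toMeasure)
    (hbε : IndepFun (fun ω => fun r => b r ω) ε μ)
    (t : (Fin n → ℝ) → ℝ) (ht : Measurable t)
    (pval : Ω → ℝ)
    (hpval : ∀ ω, pval ω = (R + 1 : ℝ)⁻¹ * (1 +
        ∑ r : Fin R,
          if t (ε ω) ≤ t (fun i => (if b r ω i then (1 : ℝ) else -1) * ε ω i)
          then (1 : ℝ) else 0))
    (α : ℝ) (hα₀ : 0 < α) (hα₁ : α ≤ 1) :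
    μ {ω | pval ω ≤ α} ≤ ENNReal.ofReal α :=
  monte_carlo_signflip_test_valid_general μ ε hεmeas hsym b hbmeas hbiid hblaw hbε t ht pval hpval α
    hα₀
end
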